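/- Let V = ℝ[k₀,0] ⊕ ⊕_{μ∈ℳ} ℝ[k_μ,μ] and W = ℝ[l₀,0] ⊕ ⊕_{μ∈ℳ} ℝ[l_μ,μ] be finite-dimensional orthogonal torus representations (k₀,l₀,k_μ,l_μ ∈ ℕ₀, all but finitely many k_μ, l_μ zero). Then for every μ ∈ ℳ and every N ∈ ℕ, the coefficient at χ_𝕋(𝕋/H_μ⁺) of the Euler-ring element χ_𝕋(S^V)^{−N} ⋆ (χ_𝕋(S^W)^N − 𝕀) equals (−1)^{k₀N} · N · ( (−1)^{l₀N+1} l_μ + ((−1)^{l₀N} − 1) k_μ ). -/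

import Mathlib

/-!
Call an element of `U(𝕋)` negligible if it is supported on subgroups of codimension at least two.
Negligible elements form a subgroup that absorbs `⋆` from both sides, and by the dimension
condition in `⋆` the product of two combinations of codimension-one generators `χ_𝕋(𝕋/H_ν⁺)`
is negligible.
Modulo negligible elements, `U(𝕋)` therefore behaves like the dual numbers:
`(c𝕀 + f) ⋆ (c'𝕀 + f') ≡ cc'𝕀 + c'f + cf'`, hence `(c𝕀 + f)^N ≡ c^N𝕀 + N c^{N-1} f`.
Applying this to `χ_𝕋(S^V)^{-1}` and `χ_𝕋(S^W)` and reading off the coefficient at `H_μ` gives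
the formula.
-/

/-- The Euler-ring multiplication of a torus on the free ℤ-module on the set of
closed subgroups. -/
noncomputable def eulerMul {Sub : Type*} (dimT : ℕ) (dim : Sub → ℕ)
    (inter : Sub → Sub → Sub) (x y : Sub →₀ ℤ) : Sub →₀ ℤ :=
  x.sum fun H a => y.sum fun K b =>
    if dim H + dim K = dimT + dim (inter H K)
    then Finsupp.single (inter H K) (a * b) else 0

/-- Powers in the Euler ring (`x^0 = 𝕀 = χ_𝕋(𝕋/𝕋⁺)`). -/
noncomputable def eulerPow {Sub : Type*} (dimT : ℕ) (dim : Sub → ℕ)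
    (inter : Sub → Sub → Sub) (top : Sub) (x : Sub →₀ ℤ) : ℕ → (Sub →₀ ℤ)
  | 0 => Finsupp.single top 1
  | n + 1 => eulerMul dimT dim inter x (eulerPow dimT dim inter top x n)

/-- `lowDim dimT dim y` : `y` is a ℤ-linear combination of generators
`χ_𝕋(𝕋/H⁺)` with `dim H ≤ dim 𝕋 − 2`. -/
def lowDim {Sub : Type*} (dimT : ℕ) (dim : Sub → ℕ) (y : Sub →₀ ℤ) : Prop :=
  ∀ H ∈ y.support, dim H + 2 ≤ dimT

section EulerRing

variable {Sub : Type*} {dimT : ℕ} {dim : Sub → ℕ} {inter : Sub → Sub → Sub}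

theorem eulerMul_add_left (x x' y : Sub →₀ ℤ) :
    eulerMul dimT dim inter (x + x') y
      = eulerMul dimT dim inter x y + eulerMul dimT dim inter x' y := by
  unfold eulerMul
  refine Finsupp.sum_add_index' (fun H => by simp) (fun H a a' => ?_)
  rw [← Finsupp.sum_add]
  congr 1; funext K b
  split <;> simp [add_mul, Finsupp.single_add]

theorem eulerMul_add_right (x y y' : Sub →₀ ℤ) :
    eulerMul dimT dim inter x (y + y')
      = eulerMul dimT dim inter x y + eulerMul dimT dim inter x y' := by
  unfold eulerMul
  rw [← Finsupp.sum_add]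
  refine Finsupp.sum_congr fun H _ => ?_
  refine Finsupp.sum_add_index' (fun K => by simp) (fun K b b' => ?_)
  split <;> simp [mul_add, Finsupp.single_add]

theorem exists_of_mem_support_eulerMul {x y : Sub →₀ ℤ} {L : Sub}
    (hL : L ∈ (eulerMul dimT dim inter x y).support) :
    ∃ H ∈ x.support, ∃ K ∈ y.support,
      L = inter H K ∧ dim H + dim K = dimT + dim (inter H K) := by
  classical
  obtain ⟨H, hH, hL⟩ := Finset.mem_biUnion.1 (Finsupp.support_sum hL)
  obtain ⟨K, hK, hL⟩ := Finset.mem_biUnion.1 (Finsupp.support_sum hL)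
  refine ⟨H, hH, K, hK, ?_⟩
  split_ifs at hL with hdimHK
  · exact ⟨Finset.mem_singleton.1 (Finsupp.support_single_subset hL), hdimHK⟩
  · simp at hL

theorem eulerMul_single_top_left {top : Sub} (hdimtop : dim top = dimT)
    (hinter_top : ∀ H, inter top H = H) (c : ℤ)
    (y : Sub →₀ ℤ) : eulerMul dimT dim inter (Finsupp.single top c) y = c • y := by
  unfold eulerMul
  rw [Finsupp.sum_single_index (by simp)]
  conv_rhs => rw [← Finsupp.sum_single y, Finsupp.smul_sum]
  refine Finsupp.sum_congr fun K _ => ?_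
  rw [hinter_top, hdimtop, if_pos rfl, Finsupp.smul_single, smul_eq_mul]

theorem eulerMul_single_top_right {top : Sub} (hdimtop : dim top = dimT)
    (hinter_top' : ∀ H, inter H top = H) (c : ℤ)
    (x : Sub →₀ ℤ) : eulerMul dimT dim inter x (Finsupp.single top c) = c • x := by
  unfold eulerMul
  conv_rhs => rw [← Finsupp.sum_single x, Finsupp.smul_sum]
  refine Finsupp.sum_congr fun H _ => ?_
  rw [Finsupp.sum_single_index (by simp), hinter_top', hdimtop, if_pos (add_comm _ _),
    Finsupp.smul_single, smul_eq_mul, mul_comm]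

theorem lowDim_add {O O' : Sub →₀ ℤ} (hO : lowDim dimT dim O) (hO' : lowDim dimT dim O') :
    lowDim dimT dim (O + O') := fun H hH => by
  classical
  rcases Finset.mem_union.1 (Finsupp.support_add hH) with hH | hH
  exacts [hO H hH, hO' H hH]

theorem lowDim_smul {O : Sub →₀ ℤ} (c : ℤ) (hO : lowDim dimT dim O) :
    lowDim dimT dim (c • O) := fun H hH => hO H (Finsupp.support_smul hH)

theorem lowDim_eulerMul_left (hdim : ∀ H, dim H ≤ dimT) {O : Sub →₀ ℤ}
    (hO : lowDim dimT dim O) (y : Sub →₀ ℤ) :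
    lowDim dimT dim (eulerMul dimT dim inter O y) := by
  intro L hL
  obtain ⟨H, hH, K, -, rfl, hdimHK⟩ := exists_of_mem_support_eulerMul hL
  have := hO H hH; have := hdim K; omega

theorem lowDim_eulerMul_right (hdim : ∀ H, dim H ≤ dimT) {O : Sub →₀ ℤ}
    (hO : lowDim dimT dim O) (x : Sub →₀ ℤ) :
    lowDim dimT dim (eulerMul dimT dim inter x O) := by
  intro L hL
  obtain ⟨H, -, K, hK, rfl, hdimHK⟩ := exists_of_mem_support_eulerMul hL
  have := hO K hK; have := hdim H; omega

theorem lowDim_eulerMul_of_codimOne {x y : Sub →₀ ℤ}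
    (hx : ∀ H ∈ x.support, dim H + 1 = dimT) (hy : ∀ K ∈ y.support, dim K + 1 = dimT) :
    lowDim dimT dim (eulerMul dimT dim inter x y) := by
  intro L hL
  obtain ⟨H, hH, K, hK, rfl, hdimHK⟩ := exists_of_mem_support_eulerMul hL
  have := hx H hH; have := hy K hK; omega

end EulerRing

section CodimOneExpansion

variable {Sub : Type*} {dimT : ℕ} {dim : Sub → ℕ} {inter : Sub → Sub → Sub} {top : Sub}
  {Mw : Type*} {Hsub : Mw → Sub}

def HasCodimOneExpansion (dimT : ℕ) (dim : Sub → ℕ) (top : Sub) (Hsub : Mw → Sub)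
    (c : ℤ) (f : Mw →₀ ℤ) (x : Sub →₀ ℤ) : Prop :=
  ∃ O, lowDim dimT dim O ∧ x = Finsupp.single top c + Finsupp.mapDomain Hsub f + O

theorem mem_support_mapDomain_codimOne (hHsub : ∀ ν, dim (Hsub ν) + 1 = dimT)
    (f : Mw →₀ ℤ) : ∀ H ∈ (Finsupp.mapDomain Hsub f).support, dim H + 1 = dimT := by
  classical
  intro H hH
  obtain ⟨ν, -, rfl⟩ := Finset.mem_image.1 (Finsupp.mapDomain_support hH)
  exact hHsub ν

theorem sum_smul_single_eq_mapDomain (k : Mw →₀ ℕ) :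
    (k.sum fun ν n => (n : ℤ) • Finsupp.single (Hsub ν) (1 : ℤ))
      = Finsupp.mapDomain Hsub (k.mapRange Nat.cast Nat.cast_zero) := by
  rw [Finsupp.mapDomain, Finsupp.sum_mapRange_index (fun _ => Finsupp.single_zero _)]
  exact Finsupp.sum_congr fun ν _ => Finsupp.smul_single_one _ _

theorem natCast_mul_pow_sub_one_mul {R : Type*} [CommSemiring R] (n : ℕ) (c : R) :
    (n : R) * c ^ (n - 1) * c = n * c ^ n := by
  cases n <;> simp [pow_succ, mul_assoc]

namespace HasCodimOneExpansion

theorem sub_single_top {c : ℤ} {f : Mw →₀ ℤ} {x : Sub →₀ ℤ}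
    (hx : HasCodimOneExpansion dimT dim top Hsub c f x) (d : ℤ) :
    HasCodimOneExpansion dimT dim top Hsub (c - d) f (x - Finsupp.single top d) := by
  obtain ⟨O, hO, rfl⟩ := hx
  refine ⟨O, hO, ?_⟩
  rw [Finsupp.single_sub]
  abel

theorem mul (hdim : ∀ H, dim H ≤ dimT) (hdimtop : dim top = dimT)
    (hinter_top : ∀ H, inter top H = H) (hinter_top' : ∀ H, inter H top = H)
    (hHsub : ∀ ν, dim (Hsub ν) + 1 = dimT)
    {c c' : ℤ} {f f' : Mw →₀ ℤ} {x y : Sub →₀ ℤ}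
    (hx : HasCodimOneExpansion dimT dim top Hsub c f x)
    (hy : HasCodimOneExpansion dimT dim top Hsub c' f' y) :
    HasCodimOneExpansion dimT dim top Hsub (c * c') (c' • f + c • f')
      (eulerMul dimT dim inter x y) := by
  obtain ⟨O, hO, rfl⟩ := hx
  obtain ⟨O', hO', rfl⟩ := hy
  set F := Finsupp.mapDomain Hsub f
  set F' := Finsupp.mapDomain Hsub f'
  have hFF' : lowDim dimT dim (eulerMul dimT dim inter F F') :=
    lowDim_eulerMul_of_codimOne (mem_support_mapDomain_codimOne hHsub f)
      (mem_support_mapDomain_codimOne hHsub f')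
  refine ⟨c • O' + eulerMul dimT dim inter F F' + eulerMul dimT dim inter F O'
      + eulerMul dimT dim inter O (Finsupp.single top c' + F' + O'),
    lowDim_add (lowDim_add (lowDim_add (lowDim_smul c hO') hFF')
      (lowDim_eulerMul_right hdim hO' F)) (lowDim_eulerMul_left hdim hO _), ?_⟩
  simp only [eulerMul_add_left, eulerMul_add_right,
    eulerMul_single_top_left hdimtop hinter_top, eulerMul_single_top_right hdimtop hinter_top',
    Finsupp.mapDomain_add, Finsupp.mapDomain_smul, F, F', smul_add, Finsupp.smul_single,
    smul_eq_mul, mul_comm c' c]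
  abel

theorem pow (hdim : ∀ H, dim H ≤ dimT) (hdimtop : dim top = dimT)
    (hinter_top : ∀ H, inter top H = H) (hinter_top' : ∀ H, inter H top = H)
    (hHsub : ∀ ν, dim (Hsub ν) + 1 = dimT) {c : ℤ} {f : Mw →₀ ℤ} {x : Sub →₀ ℤ}
    (hx : HasCodimOneExpansion dimT dim top Hsub c f x) (n : ℕ) :
    HasCodimOneExpansion dimT dim top Hsub (c ^ n) (((n : ℤ) * c ^ (n - 1)) • f)
      (eulerPow dimT dim inter top x n) := by
  induction n with
  | zero => exact ⟨0, fun H hH => by simp at hH, by simp [eulerPow]⟩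
  | succ n ih =>
    convert hx.mul hdim hdimtop hinter_top hinter_top' hHsub ih using 1
    · ring
    · rw [smul_smul, ← add_smul, Nat.add_sub_cancel]
      congr 1
      push_cast
      linear_combination -natCast_mul_pow_sub_one_mul n c
    · rfl

theorem apply_Hsub (hdimtop : dim top = dimT) (hHsub : ∀ ν, dim (Hsub ν) + 1 = dimT)
    (hHsubInj : Function.Injective Hsub) {c : ℤ} {f : Mw →₀ ℤ} {x : Sub →₀ ℤ}
    (hx : HasCodimOneExpansion dimT dim top Hsub c f x) (μ : Mw) : x (Hsub μ) = f μ := by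
  obtain ⟨O, hO, rfl⟩ := hx
  have htop : top ≠ Hsub μ := fun h => by have := hHsub μ; rw [← h] at this; omega
  have hO_μ : O (Hsub μ) = 0 :=
    Finsupp.notMem_support_iff.1 fun h => by have := hO _ h; have := hHsub μ; omega
  simp [Finsupp.single_eq_of_ne' htop, hO_μ, Finsupp.mapDomain_apply hHsubInj]

end HasCodimOneExpansion

end CodimOneExpansion

theorem statement7_general
    -- the closed subgroups of the torus 𝕋, their dimensions and intersections
    (Sub : Type*) (dimT : ℕ) (dim : Sub → ℕ) (hdim : ∀ H, dim H ≤ dimT)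
    (inter : Sub → Sub → Sub)
    (top : Sub) (hdimtop : dim top = dimT)
    (hinter_top : ∀ H, inter top H = H) (hinter_top' : ∀ H, inter H top = H)
    -- ℳ: the chosen set of nonzero weights (one of each pair ±μ)
    (Mw : Type*)
    -- μ ↦ H_μ = {exp(φ) : μ(φ) ∈ 2πℤ}, the codimension-one isotropy subgroups
    (Hsub : Mw → Sub)
    (hHsub : ∀ ν, dim (Hsub ν) + 1 = dimT)
    (hHsubInj : Function.Injective Hsub)
    -- multiplicities of V = ℝ[k₀,0] ⊕ ⊕_{μ∈ℳ} ℝ[k_μ,μ] and W = ℝ[l₀,0] ⊕ ⊕ ℝ[l_μ,μ]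
    (k₀ l₀ : ℕ) (k l : Mw →₀ ℕ)
    -- a = χ_𝕋(S^V), ainv = χ_𝕋(S^V)⁻¹, b = χ_𝕋(S^W)
    (ainv b : Sub →₀ ℤ)
    -- … with the expansion χ_𝕋(S^V)⁻¹ = (−1)^{k₀}(𝕀 + Σ k_μ χ_𝕋(𝕋/H_μ⁺)) + 𝒪
    (hainv : ∃ O : Sub →₀ ℤ, lowDim dimT dim O ∧
      ainv = (-1 : ℤ) ^ k₀ • (Finsupp.single top 1
        + k.sum fun ν n => (n : ℤ) • Finsupp.single (Hsub ν) 1) + O)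
    (hb : ∃ O : Sub →₀ ℤ, lowDim dimT dim O ∧
      b = (-1 : ℤ) ^ l₀ • (Finsupp.single top 1
        - l.sum fun ν n => (n : ℤ) • Finsupp.single (Hsub ν) 1) + O)
    (μ : Mw) (N : ℕ) :
    (eulerMul dimT dim inter (eulerPow dimT dim inter top ainv N)
        (eulerPow dimT dim inter top b N - Finsupp.single top 1)) (Hsub μ)
      = (-1 : ℤ) ^ (k₀ * N) * (N : ℤ) *
          ((-1 : ℤ) ^ (l₀ * N + 1) * (l μ : ℤ)
            + ((-1 : ℤ) ^ (l₀ * N) - 1) * (k μ : ℤ)) := by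
  set s : ℤ := (-1) ^ k₀
  set t : ℤ := (-1) ^ l₀
  have hainv' : HasCodimOneExpansion dimT dim top Hsub s (s • k.mapRange Nat.cast Nat.cast_zero)
      ainv := by
    obtain ⟨O, hO, rfl⟩ := hainv
    refine ⟨O, hO, ?_⟩
    rw [sum_smul_single_eq_mapDomain, Finsupp.mapDomain_smul, smul_add, Finsupp.smul_single_one]
  have hb' : HasCodimOneExpansion dimT dim top Hsub t (-t • l.mapRange Nat.cast Nat.cast_zero)
      b := by
    obtain ⟨O, hO, rfl⟩ := hb
    refine ⟨O, hO, ?_⟩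
    rw [sum_smul_single_eq_mapDomain, Finsupp.mapDomain_smul, smul_sub, Finsupp.smul_single_one,
      neg_smul, sub_eq_add_neg]
  have hprod := (hainv'.pow (inter := inter) hdim hdimtop hinter_top hinter_top' hHsub N).mul
    hdim hdimtop hinter_top hinter_top' hHsub
    ((hb'.pow hdim hdimtop hinter_top hinter_top' hHsub N).sub_single_top 1)
  rw [hprod.apply_Hsub hdimtop hHsub hHsubInj, pow_mul, pow_mul, pow_succ]
  simp only [Finsupp.add_apply, Finsupp.smul_apply, Finsupp.mapRange_apply, smul_eq_mul]
  linear_combination (t ^ N - 1) * (k μ : ℤ) * natCast_mul_pow_sub_one_mul N s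
    - s ^ N * (l μ : ℤ) * natCast_mul_pow_sub_one_mul N t

theorem statement7
    -- the closed subgroups of the torus 𝕋, their dimensions and intersections
    (Sub : Type*) (dimT : ℕ) (dim : Sub → ℕ) (hdim : ∀ H, dim H ≤ dimT)
    (inter : Sub → Sub → Sub)
    (hinter_left : ∀ H K, dim (inter H K) ≤ dim H)
    (hinter_right : ∀ H K, dim (inter H K) ≤ dim K)
    (top : Sub) (hdimtop : dim top = dimT)
    (hinter_top : ∀ H, inter top H = H) (hinter_top' : ∀ H, inter H top = H)
    -- ℳ: the chosen set of nonzero weights (one of each pair ±μ)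
    (Mw : Type*)
    -- μ ↦ H_μ = {exp(φ) : μ(φ) ∈ 2πℤ}, the codimension-one isotropy subgroups
    (Hsub : Mw → Sub)
    (hHsub : ∀ ν, dim (Hsub ν) + 1 = dimT)
    (hHsubInj : Function.Injective Hsub)
    -- multiplicities of V = ℝ[k₀,0] ⊕ ⊕_{μ∈ℳ} ℝ[k_μ,μ] and W = ℝ[l₀,0] ⊕ ⊕ ℝ[l_μ,μ]
    (k₀ l₀ : ℕ) (k l : Mw →₀ ℕ)
    -- a = χ_𝕋(S^V), ainv = χ_𝕋(S^V)⁻¹, b = χ_𝕋(S^W)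
    (a ainv b : Sub →₀ ℤ)
    (ha : ∃ O : Sub →₀ ℤ, lowDim dimT dim O ∧
      a = (-1 : ℤ) ^ k₀ • (Finsupp.single top 1
        - k.sum fun ν n => (n : ℤ) • Finsupp.single (Hsub ν) 1) + O)
    -- ainv is the Euler-ring inverse of a = χ_𝕋(S^V) …
    (hainv_l : eulerMul dimT dim inter a ainv = Finsupp.single top 1)
    (hainv_r : eulerMul dimT dim inter ainv a = Finsupp.single top 1)
    -- … with the expansion χ_𝕋(S^V)⁻¹ = (−1)^{k₀}(𝕀 + Σ k_μ χ_𝕋(𝕋/H_μ⁺)) + 𝒪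
    (hainv : ∃ O : Sub →₀ ℤ, lowDim dimT dim O ∧
      ainv = (-1 : ℤ) ^ k₀ • (Finsupp.single top 1
        + k.sum fun ν n => (n : ℤ) • Finsupp.single (Hsub ν) 1) + O)
    (hb : ∃ O : Sub →₀ ℤ, lowDim dimT dim O ∧
      b = (-1 : ℤ) ^ l₀ • (Finsupp.single top 1
        - l.sum fun ν n => (n : ℤ) • Finsupp.single (Hsub ν) 1) + O)
    (μ : Mw) (N : ℕ) (hN : 0 < N) :
    (eulerMul dimT dim inter (eulerPow dimT dim inter top ainv N)
        (eulerPow dimT dim inter top b N - Finsupp.single top 1)) (Hsub μ)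
      = (-1 : ℤ) ^ (k₀ * N) * (N : ℤ) *
          ((-1 : ℤ) ^ (l₀ * N + 1) * (l μ : ℤ)
            + ((-1 : ℤ) ^ (l₀ * N) - 1) * (k μ : ℤ)) :=
  statement7_general Sub dimT dim hdim inter top hdimtop hinter_top hinter_top' Mw Hsub hHsub
    hHsubInj k₀ l₀ k l ainv b hainv hb μ N
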